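/- (tensor_within_caps) For Kleisli morphisms f : A → itree E B and g : C → itree E D, capability sets caps1, caps2, and inputs a : A, c : C: if within_caps caps1 (f a) and within_caps caps2 (g c), then within_caps (cap_union caps1 caps2) ((f ⊗ g) (a, c)), where (f ⊗ g) (a, c) := f a >>= fun b => g c >>= fun d => Ret (b, d). -/

import Mathlib

/-!
Enlarging the capability set only weakens the side condition on `Vis` nodes, so `f a` and `g c`
both lie within `cap_union caps1 caps2`, and `ktensor` is two nested binds ending in `Ret`.
Being within `caps` is closed under bind: the trees `bind u k` with `u` within `caps`, together
with the trees already within `caps`, form a post-fixed point of `withinCapsF`, because `bind`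
commutes with `Tau` and `Vis` and turns `Ret r` into `k r`.
-/

/-- The polynomial functor whose final coalgebra is the type of interaction trees. -/
def ITreePF (E : Type → Type) (R : Type) : PFunctor.{1} :=
  ⟨ULift.{1} R ⊕ (PUnit.{2} ⊕ Σ X : Type, E X),
   fun a =>
     match a with
     | Sum.inl _ => PEmpty.{2}
     | Sum.inr (Sum.inl _) => PUnit.{2}
     | Sum.inr (Sum.inr p) => ULift.{1} p.1⟩

/-- Interaction trees, defined coinductively as the M-type of `ITreePF`. -/
def ITree (E : Type → Type) (R : Type) : Type 1 := PFunctor.M (ITreePF E R)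

namespace ITree

variable {E : Type → Type} {R A B : Type}

/-- Pure value leaf. -/
def Ret (r : R) : ITree E R :=
  PFunctor.M.mk ⟨Sum.inl ⟨r⟩, fun e => e.elim⟩

/-- Silent step. -/
def Tau (t : ITree E R) : ITree E R :=
  PFunctor.M.mk ⟨Sum.inr (Sum.inl PUnit.unit), fun _ => t⟩

/-- Visible event with continuation. -/
def Vis {X : Type} (e : E X) (k : X → ITree E R) : ITree E R :=
  PFunctor.M.mk ⟨Sum.inr (Sum.inr ⟨X, e⟩), fun x => k x.down⟩

/-- Monadic bind: replace every `Ret r` leaf of `t` by `k r`, by corecursion. -/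
def bind (t : ITree E A) (k : A → ITree E B) : ITree E B :=
  PFunctor.M.corec
    (fun s : ITree E A ⊕ ITree E B =>
      match s with
      | Sum.inl t =>
        match PFunctor.M.dest t with
        | ⟨Sum.inl r, _⟩ =>
          let d := PFunctor.M.dest (k r.down)
          ⟨d.1, fun b => Sum.inr (d.2 b)⟩
        | ⟨Sum.inr (Sum.inl _), f⟩ =>
          ⟨Sum.inr (Sum.inl PUnit.unit), fun b => Sum.inl (f b)⟩
        | ⟨Sum.inr (Sum.inr p), f⟩ =>
          ⟨Sum.inr (Sum.inr p), fun b => Sum.inl (f b)⟩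
      | Sum.inr u =>
        let d := PFunctor.M.dest u
        ⟨d.1, fun b => Sum.inr (d.2 b)⟩)
    (Sum.inl t)

end ITree

/-- Capability sets as characteristic functions. -/
def CapSet (Capability : Type) : Type := Capability → Bool

def cap_empty {Capability : Type} : CapSet Capability := fun _ => false

def cap_full {Capability : Type} : CapSet Capability := fun _ => true

def cap_union {Capability : Type} (s1 s2 : CapSet Capability) : CapSet Capability :=
  fun c => s1 c || s2 c

/-- An event is within `caps` if it needs no capability, or its required capability is in `caps`. -/
def directive_in_caps {E : Type → Type} {Capability : Type}
    (req : ∀ X : Type, E X → Option Capability) (caps : CapSet Capability)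
    {X : Type} (e : E X) : Prop :=
  req X e = none ∨ ∃ c, req X e = some c ∧ caps c = true

/-- One step of the `within_caps` generating functor. -/
def withinCapsF {E : Type → Type} {Capability : Type}
    (req : ∀ X : Type, E X → Option Capability) (caps : CapSet Capability)
    {R : Type} (P : ITree E R → Prop) (t : ITree E R) : Prop :=
  (∃ r, t = ITree.Ret r) ∨
  (∃ t', t = ITree.Tau t' ∧ P t') ∨
  (∃ (X : Type) (e : E X) (k : X → ITree E R),
      t = ITree.Vis e k ∧ directive_in_caps req caps e ∧ ∀ x, P (k x))

/-- `within_caps caps t`: greatest fixed point of `withinCapsF`, i.e. `t` belongs to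
some postfixed point of the generating functor. -/
def within_caps {E : Type → Type} {Capability : Type}
    (req : ∀ X : Type, E X → Option Capability) (caps : CapSet Capability)
    {R : Type} (t : ITree E R) : Prop :=
  ∃ P : ITree E R → Prop, (∀ t', P t' → withinCapsF req caps P t') ∧ P t

/-- Tensor product of Kleisli morphisms into interaction trees. -/
def ktensor {E : Type → Type} {A B C D : Type}
    (f : A → ITree E B) (g : C → ITree E D) : A × C → ITree E (B × D) :=
  fun p => ITree.bind (f p.1) (fun b => ITree.bind (g p.2) (fun d => ITree.Ret (b, d)))

namespace PFunctor.M

variable {P : PFunctor} {α : Type*}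

theorem corec_inr (g : α ⊕ P.M → P (α ⊕ P.M))
    (hg : ∀ u, g (Sum.inr u) = P.map Sum.inr (dest u)) (u : P.M) :
    M.corec g (Sum.inr u) = u := by
  have h_inr : M.corec g ∘ Sum.inr = M.corec dest :=
    corec_unique _ _ fun u => by rw [Function.comp_apply, dest_corec, hg, PFunctor.map_map]
  have h_id : id = M.corec (dest : P.M → P P.M) := corec_unique _ _ fun _ => rfl
  exact congrFun (h_inr.trans h_id.symm) u

end PFunctor.M

namespace ITree

variable {E : Type → Type} {A B : Type}

theorem ret_bind (r : A) (k : A → ITree E B) : bind (Ret r) k = k r := by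
  rw [bind, PFunctor.M.corec_def]
  conv_rhs => rw [← PFunctor.M.mk_dest (k r)]
  congr 1
  exact congrArg (PFunctor.map _ · _) (funext (PFunctor.M.corec_inr _ fun _ => rfl))

theorem tau_bind (t : ITree E A) (k : A → ITree E B) : bind (Tau t) k = Tau (bind t k) :=
  PFunctor.M.corec_def _ _

theorem vis_bind {X : Type} (e : E X) (h : X → ITree E A) (k : A → ITree E B) :
    bind (Vis e h) k = Vis e fun x => bind (h x) k :=
  PFunctor.M.corec_def _ _

end ITree

section WithinCaps

variable {E : Type → Type} {Capability : Type} {req : ∀ X : Type, E X → Option Capability}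
  {caps caps' : CapSet Capability}

theorem cap_union_of_left {caps1 caps2 : CapSet Capability} {c : Capability}
    (h : caps1 c = true) : cap_union caps1 caps2 c = true := by
  simp [cap_union, h]

theorem cap_union_of_right {caps1 caps2 : CapSet Capability} {c : Capability}
    (h : caps2 c = true) : cap_union caps1 caps2 c = true := by
  simp [cap_union, h]

theorem directive_in_caps_mono (hcaps : ∀ c, caps c = true → caps' c = true)
    {X : Type} {e : E X} (he : directive_in_caps req caps e) : directive_in_caps req caps' e :=
  he.imp_right fun ⟨c, hc, hc_caps⟩ => ⟨c, hc, hcaps c hc_caps⟩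

theorem withinCapsF_mono (hcaps : ∀ c, caps c = true → caps' c = true) {R : Type}
    {P Q : ITree E R → Prop} (hPQ : ∀ t, P t → Q t) {t : ITree E R} :
    withinCapsF req caps P t → withinCapsF req caps' Q t := by
  rintro (⟨r, rfl⟩ | ⟨t', rfl, ht'⟩ | ⟨X, e, k, rfl, he, hk⟩)
  · exact Or.inl ⟨r, rfl⟩
  · exact Or.inr (Or.inl ⟨t', rfl, hPQ _ ht'⟩)
  · exact Or.inr (Or.inr ⟨X, e, k, rfl, directive_in_caps_mono hcaps he, fun x => hPQ _ (hk x)⟩)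

theorem withinCapsF_of_within_caps {R : Type} {t : ITree E R} (h : within_caps req caps t) :
    withinCapsF req caps (within_caps req caps) t :=
  let ⟨P, hP, ht⟩ := h
  withinCapsF_mono (fun _ => id) (fun _ ht' => ⟨P, hP, ht'⟩) (hP t ht)

theorem within_caps_mono (hcaps : ∀ c, caps c = true → caps' c = true) {R : Type}
    {t : ITree E R} (h : within_caps req caps t) : within_caps req caps' t :=
  let ⟨P, hP, ht⟩ := h
  ⟨P, fun t' ht' => withinCapsF_mono hcaps (fun _ => id) (hP t' ht'), ht⟩

theorem within_caps_ret {R : Type} (r : R) : within_caps req caps (ITree.Ret r : ITree E R) :=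
  ⟨fun t => ∃ r, t = ITree.Ret r, fun _ ht => Or.inl ht, r, rfl⟩

theorem within_caps_bind {A B : Type} {t : ITree E A} {k : A → ITree E B}
    (ht : within_caps req caps t) (hk : ∀ r, within_caps req caps (k r)) :
    within_caps req caps (ITree.bind t k) := by
  let P : ITree E B → Prop := fun s =>
    (∃ u, within_caps req caps u ∧ s = ITree.bind u k) ∨ within_caps req caps s
  have h_done {s : ITree E B} (hs : within_caps req caps s) : withinCapsF req caps P s :=
    withinCapsF_mono (fun _ => id) (fun _ => Or.inr) (withinCapsF_of_within_caps hs)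
  refine ⟨P, ?_, Or.inl ⟨t, ht, rfl⟩⟩
  rintro s (⟨u, hu, rfl⟩ | hs)
  · rcases withinCapsF_of_within_caps hu with ⟨r, rfl⟩ | ⟨u', rfl, hu'⟩ | ⟨X, e, h, rfl, he, hh⟩
    · rw [ITree.ret_bind]
      exact h_done (hk r)
    · rw [ITree.tau_bind]
      exact Or.inr (Or.inl ⟨_, rfl, Or.inl ⟨u', hu', rfl⟩⟩)
    · rw [ITree.vis_bind]
      exact Or.inr (Or.inr ⟨X, e, _, rfl, he, fun x => Or.inl ⟨h x, hh x, rfl⟩⟩)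
  · exact h_done hs

end WithinCaps

/-- tensor_within_caps: the tensor product is within the union of capability sets. -/
theorem tensor_within_caps {E : Type → Type} {Capability : Type}
    (req : ∀ X : Type, E X → Option Capability)
    {A B C D : Type} (caps1 caps2 : CapSet Capability)
    (f : A → ITree E B) (g : C → ITree E D) (a : A) (c : C)
    (hf : within_caps req caps1 (f a))
    (hg : within_caps req caps2 (g c)) :
    within_caps req (cap_union caps1 caps2) (ktensor f g (a, c)) :=
  within_caps_bind (within_caps_mono (fun _ => cap_union_of_left) hf) fun _ =>
    within_caps_bind (within_caps_mono (fun _ => cap_union_of_right) hg) fun _ =>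
      within_caps_ret _
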